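/- arXiv:1202.2139 — 6 statements merged into one kernel-verified Lean document; each statement's English description precedes it below -/
import Mathlib

section
/- Let d ≥ 1 and ν ∈ (0, 1). Let u : ℝ^d → ℂ be continuous and square-integrable with finite Hölder seminorm |||u|||_{C^ν}. Then u is bounded and, for every ε ∈ (0, 1], sup_{x ∈ ℝ^d} |u(x)| ≤ (d/(d+ν)) · ε^ν · |||u|||_{C^ν} + |B(0,1)|^{−1/2} · ε^{−d/2} · ‖u‖_{L²(ℝ^d)}, where |B(0,1)| denotes the Lebesgue measure of the unit ball in ℝ^d. -/
/-!
Average the triangle inequality `‖u x‖ ≤ ‖u x - u y‖ + ‖u y‖` over `y` in the ball `B(x, ε)`,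
of measure `ε^d |B(0,1)|`. The Hölder seminorm bound turns the first average into
`H ⨍_{B(0,ε)} |y|^ν = d/(d+ν) ε^ν H` (polar coordinates), and Hölder's inequality bounds the
second by `|B(x,ε)|^{-1/p} ‖u‖_{L^p}`.
-/

open MeasureTheory Metric Set
open scoped ENNReal

section Translation

variable {E : Type*} [NormedAddCommGroup E] [MeasurableSpace E] [MeasurableAdd E]
  (μ : Measure E) [μ.IsAddLeftInvariant]

theorem integral_dist_rpow_ball (x : E) (ν ε : ℝ) :
    ∫ y in ball x ε, dist x y ^ ν ∂μ = ∫ y in ball (0 : E) ε, ‖y‖ ^ ν ∂μ := by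
  rw [← (measurePreserving_add_left μ x).setIntegral_preimage_emb
    (measurableEmbedding_addLeft x)]
  simp [preimage_add_ball]

end Translation

section HaarBall

variable {E : Type*} [NormedAddCommGroup E] [NormedSpace ℝ E] [FiniteDimensional ℝ E]
  [MeasurableSpace E] [BorelSpace E] (μ : Measure E) [μ.IsAddHaarMeasure]

theorem setIntegral_ball_fun_norm_addHaar [Nontrivial E] {F : Type*} [NormedAddCommGroup F]
    [NormedSpace ℝ F] (f : ℝ → F) (r : ℝ) :
    ∫ x in ball (0 : E) r, f ‖x‖ ∂μ =
      Module.finrank ℝ E • μ.real (ball 0 1) •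
        ∫ y in Ioo 0 r, y ^ (Module.finrank ℝ E - 1) • f y := by
  have hball : (ball (0 : E) r).indicator (fun x => f ‖x‖) = fun x => (Iio r).indicator f ‖x‖ := by
    ext x
    simp [indicator]
  rw [← integral_indicator measurableSet_ball, hball, integral_fun_norm_addHaar,
    ← integral_indicator measurableSet_Ioo, ← integral_indicator measurableSet_Ioi]
  congr 2
  refine integral_congr_ae (Filter.Eventually.of_forall fun y => ?_)
  by_cases h0 : 0 < y <;> by_cases hr : y < r <;> simp [indicator, h0, hr]

theorem integral_norm_rpow_ball [Nontrivial E] {ν : ℝ} (hν : 0 < ν) {ε : ℝ} (hε : 0 ≤ ε) :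
    ∫ y in ball (0 : E) ε, ‖y‖ ^ ν ∂μ =
      Module.finrank ℝ E * μ.real (ball 0 1) *
        (ε ^ (Module.finrank ℝ E + ν) / (Module.finrank ℝ E + ν)) := by
  set d := Module.finrank ℝ E
  have hd : 1 ≤ d := Module.finrank_pos
  have hexp : 0 < (d : ℝ) - 1 + ν + 1 := by
    have : (1 : ℝ) ≤ d := by exact_mod_cast hd
    linarith
  rw [setIntegral_ball_fun_norm_addHaar μ (· ^ ν), nsmul_eq_mul, smul_eq_mul, ← mul_assoc]
  congr 1
  have hpow : ∀ y ∈ Ioo (0 : ℝ) ε, y ^ (d - 1) • y ^ ν = y ^ ((d : ℝ) - 1 + ν) := fun y hy => by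
    rw [smul_eq_mul, ← Real.rpow_natCast, Nat.cast_sub hd, Nat.cast_one, ← Real.rpow_add hy.1]
  rw [setIntegral_congr_fun measurableSet_Ioo hpow, ← integral_Ioc_eq_integral_Ioo,
    ← intervalIntegral.integral_of_le hε, integral_rpow (Or.inl (by linarith)),
    Real.zero_rpow hexp.ne']
  ring_nf

end HaarBall

section Averaging

variable {α F : Type*} [MeasurableSpace α] {μ : Measure α} [NormedAddCommGroup F]

theorem measureReal_mul_norm_le_setIntegral_norm_sub_add {s : Set α} (hs : μ s ≠ ∞) {u : α → F}
    (hu : IntegrableOn u s μ) (x : α) :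
    μ.real s * ‖u x‖ ≤ ∫ y in s, ‖u x - u y‖ ∂μ + ∫ y in s, ‖u y‖ ∂μ := by
  have hdiff : IntegrableOn (fun y => ‖u x - u y‖) s μ :=
    ((integrableOn_const hs).sub hu).norm
  rw [← integral_add hdiff hu.norm, ← smul_eq_mul, ← setIntegral_const]
  exact integral_mono (integrableOn_const hs) (hdiff.add hu.norm) fun y => by
    simpa using norm_le_norm_sub_add (u x) (u y)

theorem setIntegral_norm_le_measureReal_rpow_mul_eLpNorm {p : ℝ≥0∞} (hp : 1 ≤ p) {u : α → F}
    (hu : MemLp u p μ) {s : Set α} (hs : μ s ≠ ∞) :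
    ∫ y in s, ‖u y‖ ∂μ ≤ μ.real s ^ (1 - 1 / p.toReal) * (eLpNorm u p μ).toReal := by
  have hL1 : eLpNorm u 1 (μ.restrict s) ≤ eLpNorm u p μ * μ s ^ (1 - 1 / p.toReal) := by
    have h := eLpNorm_le_eLpNorm_mul_rpow_measure_univ hp (hu.1.restrict (s := s))
    rw [Measure.restrict_apply_univ, ENNReal.toReal_one, div_one] at h
    exact h.trans (mul_le_mul_left (eLpNorm_mono_measure _ Measure.restrict_le_self) _)
  have hexp : 0 ≤ 1 - 1 / p.toReal := by
    rcases eq_or_ne p ∞ with rfl | hp_top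
    · simp
    · have : 1 ≤ p.toReal := by simpa using ENNReal.toReal_mono hp_top hp
      rwa [sub_nonneg, div_le_one (by linarith)]
  have hfin : eLpNorm u p μ * μ s ^ (1 - 1 / p.toReal) ≠ ∞ :=
    ENNReal.mul_ne_top hu.2.ne (ENNReal.rpow_ne_top_of_nonneg hexp hs)
  calc ∫ y in s, ‖u y‖ ∂μ = (eLpNorm u 1 (μ.restrict s)).toReal := by
        rw [integral_norm_eq_lintegral_enorm hu.1.restrict, eLpNorm_one_eq_lintegral_enorm]
    _ ≤ (eLpNorm u p μ * μ s ^ (1 - 1 / p.toReal)).toReal := ENNReal.toReal_mono hfin hL1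
    _ = μ.real s ^ (1 - 1 / p.toReal) * (eLpNorm u p μ).toReal := by
        rw [ENNReal.toReal_mul, ← ENNReal.toReal_rpow, mul_comm, measureReal_def]

end Averaging

section Holder

variable {X F : Type*} [MetricSpace X] [MeasurableSpace X] [OpensMeasurableSpace X]
  {μ : Measure X} [NormedAddCommGroup F]

theorem setIntegral_norm_sub_le_of_holder {u : X → F} {H ν : ℝ} (hν : 0 < ν)
    (hHolder : ∀ x y, 0 < dist x y → dist x y ≤ 1 → ‖u x - u y‖ ≤ H * dist x y ^ ν)
    {x : X} {ε : ℝ} (hε : ε ≤ 1)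
    (hint : IntegrableOn (fun y => dist x y ^ ν) (ball x ε) μ) :
    ∫ y in ball x ε, ‖u x - u y‖ ∂μ ≤ H * ∫ y in ball x ε, dist x y ^ ν ∂μ := by
  rw [← integral_const_mul]
  refine integral_mono_of_nonneg (Filter.Eventually.of_forall fun y => norm_nonneg _)
    (hint.const_mul H) (ae_restrict_of_forall_mem measurableSet_ball fun y hy => ?_)
  rcases (dist_nonneg : 0 ≤ dist x y).eq_or_lt with h0 | h0
  · obtain rfl := dist_eq_zero.1 h0.symm
    simp [Real.zero_rpow hν.ne']
  · exact hHolder x y h0 ((mem_ball'.1 hy).le.trans hε)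

end Holder

section Pointwise

variable {E F : Type*} [NormedAddCommGroup E] [NormedSpace ℝ E] [FiniteDimensional ℝ E]
  [Nontrivial E] [MeasurableSpace E] [BorelSpace E] (μ : Measure E) [μ.IsAddHaarMeasure]
  [NormedAddCommGroup F]

theorem norm_le_holder_add_eLpNorm {p : ℝ≥0∞} (hp : 1 ≤ p) {u : E → F} (hu : MemLp u p μ)
    {H ν : ℝ} (hν : 0 < ν)
    (hHolder : ∀ x y, 0 < dist x y → dist x y ≤ 1 → ‖u x - u y‖ ≤ H * dist x y ^ ν)
    {ε : ℝ} (hε : ε ∈ Ioc 0 1) (x : E) :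
    ‖u x‖ ≤ Module.finrank ℝ E / (Module.finrank ℝ E + ν) * ε ^ ν * H +
      μ.real (ball 0 1) ^ (-1 / p.toReal) * ε ^ (-(Module.finrank ℝ E : ℝ) / p.toReal) *
        (eLpNorm u p μ).toReal := by
  set d := Module.finrank ℝ E
  set V := μ.real (ball (0 : E) 1)
  set N := (eLpNorm u p μ).toReal
  have hε0 : 0 < ε := hε.1
  have hV : 0 < V :=
    ENNReal.toReal_pos (measure_ball_pos μ 0 one_pos).ne' measure_ball_lt_top.ne
  have hA : μ.real (ball x ε) = ε ^ (d : ℝ) * V := by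
    rw [measureReal_def, Measure.addHaar_ball μ x hε0.le, ENNReal.toReal_mul,
      ENNReal.toReal_ofReal (by positivity), Real.rpow_natCast]
    rfl
  have hfin : μ (ball x ε) ≠ ∞ := measure_ball_lt_top.ne
  have hint : IntegrableOn u (ball x ε) μ := by
    have : IsFiniteMeasure (μ.restrict (ball x ε)) := ⟨by simpa using hfin.lt_top⟩
    exact (hu.restrict _).integrable hp
  have hdist : IntegrableOn (fun y => dist x y ^ ν) (ball x ε) μ :=
    (((continuous_const.dist continuous_id).rpow_const fun _ => Or.inr hν.le).continuousOn
      |>.integrableOn_compact (isCompact_closedBall x ε)).mono_set ball_subset_closedBall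
  have key : μ.real (ball x ε) * ‖u x‖ ≤
      H * (d * V * (ε ^ ((d : ℝ) + ν) / (d + ν))) + μ.real (ball x ε) ^ (1 - 1 / p.toReal) * N :=
    calc μ.real (ball x ε) * ‖u x‖
        ≤ ∫ y in ball x ε, ‖u x - u y‖ ∂μ + ∫ y in ball x ε, ‖u y‖ ∂μ :=
          measureReal_mul_norm_le_setIntegral_norm_sub_add hfin hint x
      _ ≤ H * ∫ y in ball x ε, dist x y ^ ν ∂μ + μ.real (ball x ε) ^ (1 - 1 / p.toReal) * N :=
          add_le_add (setIntegral_norm_sub_le_of_holder hν hHolder hε.2 hdist)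
            (setIntegral_norm_le_measureReal_rpow_mul_eLpNorm hp hu hfin)
      _ = _ := by rw [integral_dist_rpow_ball, integral_norm_rpow_ball μ hν hε0.le]
  rw [hA] at key
  refine ((le_div_iff₀' (by positivity)).2 key).trans_eq ?_
  rw [Real.rpow_sub (by positivity), Real.rpow_one, Real.rpow_add hε0,
    Real.mul_rpow (by positivity) hV.le, ← Real.rpow_mul hε0.le, mul_one_div, neg_div, neg_div,
    Real.rpow_neg hV.le, Real.rpow_neg hε0.le]
  field_simp

end Pointwise

theorem stmt2_general (d : ℕ) (hd : 1 ≤ d) (ν : ℝ) (hν : ν ∈ Set.Ioo (0 : ℝ) 1)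
    (u : EuclideanSpace ℝ (Fin d) → ℂ)
    (hu2 : MemLp u 2 (volume : Measure (EuclideanSpace ℝ (Fin d))))
    (H : ℝ)
    (hHolder : ∀ x y : EuclideanSpace ℝ (Fin d),
      0 < dist x y → dist x y ≤ 1 → ‖u x - u y‖ ≤ H * dist x y ^ ν) :
    (∃ B : ℝ, ∀ x, ‖u x‖ ≤ B) ∧
    ∀ ε ∈ Set.Ioc (0 : ℝ) 1, ∀ x : EuclideanSpace ℝ (Fin d),
      ‖u x‖ ≤ (d / (d + ν)) * ε ^ ν * H +
        (volume (Metric.ball (0 : EuclideanSpace ℝ (Fin d)) 1)).toReal ^ (-(1 : ℝ) / 2) *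
          ε ^ (-(d : ℝ) / 2) * (eLpNorm u 2 volume).toReal := by
  have : Nontrivial (EuclideanSpace ℝ (Fin d)) :=
    Module.nontrivial_of_finrank_pos (R := ℝ) (by rw [finrank_euclideanSpace_fin]; omega)
  have bound := fun ε (hε : ε ∈ Set.Ioc (0 : ℝ) 1) x =>
    norm_le_holder_add_eLpNorm volume one_le_two hu2 hν.1 hHolder hε x
  simp only [finrank_euclideanSpace_fin, measureReal_def, ENNReal.toReal_ofNat] at bound
  exact ⟨⟨_, bound 1 ⟨one_pos, le_rfl⟩⟩, bound⟩

/-- a continuous, square-integrable function with finite Hölder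
seminorm `H` of order `ν` is bounded, with the quantitative bound of
Lemma A.2(a) of the paper. -/
theorem stmt2 (d : ℕ) (hd : 1 ≤ d) (ν : ℝ) (hν : ν ∈ Set.Ioo (0 : ℝ) 1)
    (u : EuclideanSpace ℝ (Fin d) → ℂ) (hu : Continuous u)
    (hu2 : MemLp u 2 (volume : Measure (EuclideanSpace ℝ (Fin d))))
    (H : ℝ) (hH : 0 ≤ H)
    (hHolder : ∀ x y : EuclideanSpace ℝ (Fin d),
      0 < dist x y → dist x y ≤ 1 → ‖u x - u y‖ ≤ H * dist x y ^ ν) :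
    (∃ B : ℝ, ∀ x, ‖u x‖ ≤ B) ∧
    ∀ ε ∈ Set.Ioc (0 : ℝ) 1, ∀ x : EuclideanSpace ℝ (Fin d),
      ‖u x‖ ≤ (d / (d + ν)) * ε ^ ν * H +
        (volume (Metric.ball (0 : EuclideanSpace ℝ (Fin d)) 1)).toReal ^ (-(1 : ℝ) / 2) *
          ε ^ (-(d : ℝ) / 2) * (eLpNorm u 2 volume).toReal :=
  stmt2_general d hd ν hν u hu2 H hHolder
end

section
/- Let d ≥ 1, ν ∈ (0, 1) and M > 0. Let η : ℝ^d → ℂ satisfy sup_x |η(x)| ≤ M and |||η|||_{C^ν} ≤ M. For t > 0 let T_t denote convolution with the Gaussian heat kernel G_t. Then for every t > 0 and every u ∈ L²(ℝ^d), ‖T_t(η u) − η · (T_t u)‖_{L²(ℝ^d)} ≤ 2^{d+3} · M · t^{ν/2} · ‖u‖_{L²(ℝ^d)}. -/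
open MeasureTheory
open scoped Real

noncomputable section

/-- The Gaussian heat kernel `G_t(y) = (4πt)^{−d/2} e^{−|y|²/(4t)}`. -/
def heatKernel (d : ℕ) (t : ℝ) (y : EuclideanSpace ℝ (Fin d)) : ℝ :=
  (4 * Real.pi * t) ^ (-(d : ℝ) / 2) * Real.exp (-‖y‖ ^ 2 / (4 * t))

open scoped ENNReal

/-!
The commutator equals `∫ G_t(y) (η(x - y) - η(x)) u(x - y) dy`, and `|η(a) - η(b)| ≤ 2M |a - b|^ν`
for all `a, b` (Hölder for `|a - b| ≤ 1`, the sup bound otherwise), so it is dominated pointwise by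
the convolution of `|u|` with the kernel `2M G_t(y) |y|^ν`. As `|y|^ν ≤ 2 t^{ν/2} e^{|y|²/(8t)}` and
`G_t(y) e^{|y|²/(8t)} = 2^{d/2} G_{2t}(y)`, this kernel has `L¹` norm at most `2^{d/2+2} M t^{ν/2}`,
and Young's inequality `‖K * f‖₂ ≤ ‖K‖₁ ‖f‖₂` (Cauchy–Schwarz against the measure `K dy`, then
Tonelli) concludes.
-/

theorem sq_lintegral_mul_le {α : Type*} [MeasurableSpace α] {μ : Measure α} {K f : α → ℝ≥0∞}
    (hK : AEMeasurable K μ) (hf : AEMeasurable f μ) :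
    (∫⁻ a, K a * f a ∂μ) ^ 2 ≤ (∫⁻ a, K a ∂μ) * ∫⁻ a, K a * f a ^ 2 ∂μ := by
  have hsplit : ∀ a, K a * f a = K a ^ (1 / 2 : ℝ) * (K a * f a ^ 2) ^ (1 / 2 : ℝ) := by
    intro a
    rw [ENNReal.mul_rpow_of_nonneg _ _ (by norm_num), ← mul_assoc,
      ← ENNReal.rpow_add_of_nonneg _ _ (by norm_num) (by norm_num), ← ENNReal.rpow_natCast,
      ← ENNReal.rpow_mul]
    norm_num
  have hCS : ∫⁻ a, K a * f a ∂μ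
      ≤ (∫⁻ a, K a ∂μ) ^ (1 / 2 : ℝ) * (∫⁻ a, K a * f a ^ 2 ∂μ) ^ (1 / 2 : ℝ) :=
    (lintegral_congr hsplit).trans_le <| ENNReal.lintegral_mul_norm_pow_le hK
      (hK.mul (hf.pow_const 2)) (by norm_num) (by norm_num) (by norm_num)
  calc (∫⁻ a, K a * f a ∂μ) ^ 2
      ≤ ((∫⁻ a, K a ∂μ) ^ (1 / 2 : ℝ) * (∫⁻ a, K a * f a ^ 2 ∂μ) ^ (1 / 2 : ℝ)) ^ 2 := by
        gcongr
    _ = (∫⁻ a, K a ∂μ) * ∫⁻ a, K a * f a ^ 2 ∂μ := by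
        rw [mul_pow, ← ENNReal.rpow_natCast, ← ENNReal.rpow_natCast, ← ENNReal.rpow_mul,
          ← ENNReal.rpow_mul]
        norm_num

theorem sq_eLpNorm_two {α E : Type*} [MeasurableSpace α] {μ : Measure α} [NormedAddCommGroup E]
    (v : α → E) :
    eLpNorm v 2 μ ^ 2 = ∫⁻ x, ‖v x‖ₑ ^ 2 ∂μ := by
  simpa using eLpNorm_nnreal_pow_eq_lintegral (f := v) (μ := μ) (p := 2) two_ne_zero

section Convolution

variable {G : Type*} [MeasurableSpace G] [AddGroup G] [MeasurableAdd₂ G] [MeasurableNeg G]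
  {μ : Measure G} [SFinite μ] [μ.IsAddRightInvariant]

theorem lintegral_sq_lintegral_mul_sub_le {K f : G → ℝ≥0∞} (hK : AEMeasurable K μ)
    (hf : AEMeasurable f μ) :
    ∫⁻ x, (∫⁻ y, K y * f (x - y) ∂μ) ^ 2 ∂μ ≤ (∫⁻ y, K y ∂μ) ^ 2 * ∫⁻ x, f x ^ 2 ∂μ := by
  have hprod : AEMeasurable (fun p : G × G => K p.2 * f (p.1 - p.2) ^ 2) (μ.prod μ) :=
    hK.comp_snd.mul ((hf.pow_const 2).comp_quasiMeasurePreserving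
      (quasiMeasurePreserving_sub_of_right_invariant μ μ))
  calc ∫⁻ x, (∫⁻ y, K y * f (x - y) ∂μ) ^ 2 ∂μ
      ≤ ∫⁻ x, (∫⁻ y, K y ∂μ) * ∫⁻ y, K y * f (x - y) ^ 2 ∂μ ∂μ :=
        lintegral_mono fun x => sq_lintegral_mul_le hK
          (hf.comp_quasiMeasurePreserving (quasiMeasurePreserving_sub_left_of_right_invariant μ x))
    _ = (∫⁻ y, K y ∂μ) * ∫⁻ y, K y * ∫⁻ x, f (x - y) ^ 2 ∂μ ∂μ := by
        rw [lintegral_const_mul'' _ hprod.lintegral_prod_right', lintegral_lintegral_swap hprod]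
        congr 1
        refine lintegral_congr fun y => ?_
        dsimp only
        refine lintegral_const_mul'' _ ?_
        exact (hf.pow_const 2).comp_quasiMeasurePreserving
          (measurePreserving_sub_right μ y).quasiMeasurePreserving
    _ = (∫⁻ y, K y ∂μ) ^ 2 * ∫⁻ x, f x ^ 2 ∂μ := by
        simp_rw [lintegral_sub_right_eq_self (fun x => f x ^ 2)]
        rw [lintegral_mul_const'' _ hK, sq, mul_assoc]

theorem eLpNorm_two_le_lintegral_mul_eLpNorm_two {E F : Type*} [NormedAddCommGroup E]
    [NormedAddCommGroup F] {K : G → ℝ≥0∞} (hK : AEMeasurable K μ) {u : G → E}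
    (hu : AEStronglyMeasurable u μ) {v : G → F}
    (hv : ∀ x, ‖v x‖ₑ ≤ ∫⁻ y, K y * ‖u (x - y)‖ₑ ∂μ) :
    eLpNorm v 2 μ ≤ (∫⁻ y, K y ∂μ) * eLpNorm u 2 μ := by
  rw [← ENNReal.pow_le_pow_left_iff two_ne_zero, mul_pow, sq_eLpNorm_two, sq_eLpNorm_two]
  calc ∫⁻ x, ‖v x‖ₑ ^ 2 ∂μ ≤ ∫⁻ x, (∫⁻ y, K y * ‖u (x - y)‖ₑ ∂μ) ^ 2 ∂μ :=
        lintegral_mono fun x => pow_le_pow_left' (hv x) 2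
    _ ≤ _ := lintegral_sq_lintegral_mul_sub_le hK hu.enorm

end Convolution

theorem norm_sub_le_two_mul_dist_rpow {X E : Type*} [MetricSpace X] [SeminormedAddCommGroup E]
    {f : X → E} {ν M : ℝ} (hν : 0 ≤ ν) (hb : ∀ x, ‖f x‖ ≤ M)
    (hloc : ∀ x y, 0 < dist x y → dist x y ≤ 1 → ‖f x - f y‖ ≤ M * dist x y ^ ν) (x y : X) :
    ‖f x - f y‖ ≤ 2 * M * dist x y ^ ν := by
  have hM : 0 ≤ M := (norm_nonneg _).trans (hb x)
  rcases eq_or_ne x y with rfl | hxy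
  · simp only [sub_self, norm_zero]
    positivity
  have hpos : 0 < dist x y := dist_pos.2 hxy
  rcases le_or_gt (dist x y) 1 with hle | hgt
  · have := mul_nonneg hM (Real.rpow_nonneg hpos.le ν)
    linarith [hloc x y hpos hle]
  · calc ‖f x - f y‖ ≤ ‖f x‖ + ‖f y‖ := norm_sub_le _ _
      _ ≤ 2 * M * 1 := by linarith [hb x, hb y]
      _ ≤ 2 * M * dist x y ^ ν := by gcongr; exact Real.one_le_rpow hgt.le hν

theorem continuous_of_norm_sub_le_mul_dist_rpow {X E : Type*} [PseudoMetricSpace X]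
    [SeminormedAddCommGroup E] {f : X → E} {C ν : ℝ} (hν : 0 < ν)
    (hf : ∀ x y, ‖f x - f y‖ ≤ C * dist x y ^ ν) : Continuous f := by
  refine continuous_iff_continuousAt.2 fun x => tendsto_iff_norm_sub_tendsto_zero.2 <|
    squeeze_zero (fun _ => norm_nonneg _) (fun y => hf y x) ?_
  have : Continuous fun y => C * dist y x ^ ν :=
    continuous_const.mul ((continuous_id.dist continuous_const).rpow_const fun _ => Or.inr hν.le)
  simpa [hν.ne'] using this.tendsto x

theorem rpow_le_two_mul_exp_sq_div_eight {ν a : ℝ} (hν₀ : 0 ≤ ν) (hν₁ : ν ≤ 1) (ha : 0 ≤ a) :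
    a ^ ν ≤ 2 * Real.exp (a ^ 2 / 8) := by
  have hlin : a ^ ν ≤ 1 + a := by
    rcases le_or_gt a 1 with h | h
    · linarith [Real.rpow_le_one ha h hν₀]
    · linarith [Real.rpow_le_self_of_one_le h.le hν₁]
  nlinarith [Real.add_one_le_exp (a ^ 2 / 8), sq_nonneg (a - 2)]

theorem rpow_le_two_mul_rpow_mul_exp {ν t s : ℝ} (hν₀ : 0 ≤ ν) (hν₁ : ν ≤ 1) (ht : 0 < t)
    (hs : 0 ≤ s) : s ^ ν ≤ 2 * t ^ (ν / 2) * Real.exp (s ^ 2 / (8 * t)) := by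
  have hst : 0 < √t := Real.sqrt_pos.2 ht
  set a := s / √t
  have hs_eq : s = √t * a := (mul_div_cancel₀ s hst.ne').symm
  have hpow : s ^ ν = t ^ (ν / 2) * a ^ ν := by
    rw [hs_eq, Real.mul_rpow hst.le (by positivity), Real.sqrt_eq_rpow, ← Real.rpow_mul ht.le]
    ring_nf
  have hexp : s ^ 2 / (8 * t) = a ^ 2 / 8 := by
    rw [hs_eq, mul_pow, Real.sq_sqrt ht.le]
    field_simp
  rw [hpow, hexp, mul_comm 2, mul_assoc]
  gcongr
  exact rpow_le_two_mul_exp_sq_div_eight hν₀ hν₁ (by positivity)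

section HeatKernel

variable {d : ℕ} {t : ℝ}

theorem heatKernel_pos (ht : 0 < t) (y : EuclideanSpace ℝ (Fin d)) : 0 < heatKernel d t y := by
  unfold heatKernel; positivity

@[fun_prop]
theorem continuous_heatKernel : Continuous (heatKernel d t) := by
  unfold heatKernel; fun_prop

theorem heatKernel_le (ht : 0 < t) (y : EuclideanSpace ℝ (Fin d)) :
    heatKernel d t y ≤ (4 * π * t) ^ (-(d : ℝ) / 2) := by
  refine mul_le_of_le_one_right (by positivity) (Real.exp_le_one_iff.2 ?_)
  exact div_nonpos_of_nonpos_of_nonneg (by simp) (by positivity)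

theorem integral_heatKernel (ht : 0 < t) : ∫ y, heatKernel d t y = 1 := by
  have hb : 0 < 1 / (4 * t) := by positivity
  have hexp : ∀ y : EuclideanSpace ℝ (Fin d),
      Real.exp (-‖y‖ ^ 2 / (4 * t)) = Real.exp (-(1 / (4 * t)) * ‖y‖ ^ 2) := fun y => by
    congr 1; ring
  simp_rw [heatKernel, hexp, integral_const_mul, GaussianFourier.integral_rexp_neg_mul_sq_norm hb,
    finrank_euclideanSpace_fin]
  rw [div_div_eq_mul_div, div_one, neg_div, Real.rpow_neg (by positivity), ← mul_assoc,
    mul_comm π 4, inv_mul_cancel₀ (by positivity)]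

theorem integrable_heatKernel (ht : 0 < t) : Integrable (heatKernel d t) :=
  Integrable.of_integral_ne_zero (by rw [integral_heatKernel ht]; exact one_ne_zero)

theorem lintegral_ofReal_heatKernel (ht : 0 < t) :
    ∫⁻ y, ENNReal.ofReal (heatKernel d t y) = 1 := by
  rw [← ofReal_integral_eq_lintegral_ofReal (integrable_heatKernel ht)
    (ae_of_all _ fun y => (heatKernel_pos ht y).le), integral_heatKernel ht, ENNReal.ofReal_one]

theorem memLp_two_heatKernel (ht : 0 < t) : MemLp (heatKernel d t) 2 := by
  refine (memLp_two_iff_integrable_sq_norm continuous_heatKernel.aestronglyMeasurable).2 ?_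
  refine ((integrable_heatKernel ht).const_mul ((4 * π * t) ^ (-(d : ℝ) / 2))).mono'
    (continuous_heatKernel.norm.pow 2).aestronglyMeasurable (ae_of_all _ fun y => ?_)
  have hG := heatKernel_pos ht y
  rw [norm_pow, norm_norm, Real.norm_eq_abs, abs_of_pos hG, sq]
  gcongr
  exact heatKernel_le ht y

theorem heatKernel_mul_exp (ht : 0 < t) (y : EuclideanSpace ℝ (Fin d)) :
    heatKernel d t y * Real.exp (‖y‖ ^ 2 / (8 * t))
      = 2 ^ ((d : ℝ) / 2) * heatKernel d (2 * t) y := by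
  have h4πt : 0 < 4 * π * t := by positivity
  rw [heatKernel, heatKernel, show 4 * π * (2 * t) = 2 * (4 * π * t) by ring,
    Real.mul_rpow zero_le_two h4πt.le, mul_assoc, ← Real.exp_add, ← mul_assoc, ← mul_assoc,
    ← Real.rpow_add two_pos, neg_div]
  simp only [add_neg_cancel, Real.rpow_zero, one_mul]
  congr 2
  field_simp
  ring

theorem heatKernel_mul_rpow_norm_le {ν : ℝ} (hν₀ : 0 ≤ ν) (hν₁ : ν ≤ 1) (ht : 0 < t)
    (y : EuclideanSpace ℝ (Fin d)) :
    heatKernel d t y * ‖y‖ ^ ν ≤ 2 ^ ((d : ℝ) / 2 + 1) * t ^ (ν / 2) * heatKernel d (2 * t) y := by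
  calc heatKernel d t y * ‖y‖ ^ ν
      ≤ heatKernel d t y * (2 * t ^ (ν / 2) * Real.exp (‖y‖ ^ 2 / (8 * t))) := by
        gcongr
        · exact (heatKernel_pos ht y).le
        · exact rpow_le_two_mul_rpow_mul_exp hν₀ hν₁ ht (norm_nonneg y)
    _ = 2 * t ^ (ν / 2) * (heatKernel d t y * Real.exp (‖y‖ ^ 2 / (8 * t))) := by ring
    _ = 2 ^ ((d : ℝ) / 2 + 1) * t ^ (ν / 2) * heatKernel d (2 * t) y := by
        rw [heatKernel_mul_exp ht, Real.rpow_add_one two_ne_zero]; ring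

theorem lintegral_heatKernel_mul_rpow_norm_le {ν : ℝ} (hν₀ : 0 ≤ ν) (hν₁ : ν ≤ 1) (ht : 0 < t) :
    ∫⁻ y, ENNReal.ofReal (heatKernel d t y * ‖y‖ ^ ν)
      ≤ ENNReal.ofReal (2 ^ ((d : ℝ) / 2 + 1) * t ^ (ν / 2)) := by
  calc ∫⁻ y, ENNReal.ofReal (heatKernel d t y * ‖y‖ ^ ν)
      ≤ ∫⁻ y, ENNReal.ofReal (2 ^ ((d : ℝ) / 2 + 1) * t ^ (ν / 2)) *
          ENNReal.ofReal (heatKernel d (2 * t) y) := by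
        refine lintegral_mono fun y => ?_
        rw [← ENNReal.ofReal_mul (by positivity)]
        exact ENNReal.ofReal_le_ofReal (heatKernel_mul_rpow_norm_le hν₀ hν₁ ht y)
    _ = _ := by
        rw [lintegral_const_mul' _ _ ENNReal.ofReal_ne_top,
          lintegral_ofReal_heatKernel (by positivity), mul_one]

theorem lintegral_heatKernel_mul_two_mul_rpow_norm_le {ν M : ℝ} (hν₀ : 0 ≤ ν) (hν₁ : ν ≤ 1)
    (hM : 0 ≤ M) (ht : 0 < t) :
    ∫⁻ y, ENNReal.ofReal (heatKernel d t y * (2 * M * ‖y‖ ^ ν))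
      ≤ ENNReal.ofReal (2 ^ (d + 3) * M * t ^ (ν / 2)) := by
  simp_rw [mul_left_comm (heatKernel d t _), ENNReal.ofReal_mul (by positivity : 0 ≤ 2 * M)]
  rw [lintegral_const_mul' _ _ ENNReal.ofReal_ne_top]
  have h2 : (2 : ℝ) ^ ((d : ℝ) / 2 + 1) ≤ 2 ^ (d + 2) := by
    rw [← Real.rpow_natCast]
    refine Real.rpow_le_rpow_of_exponent_le one_le_two ?_
    push_cast
    linarith [d.cast_nonneg (α := ℝ)]
  calc ENNReal.ofReal (2 * M) * ∫⁻ y, ENNReal.ofReal (heatKernel d t y * ‖y‖ ^ ν)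
      ≤ ENNReal.ofReal (2 * M) * ENNReal.ofReal (2 ^ ((d : ℝ) / 2 + 1) * t ^ (ν / 2)) := by
        gcongr; exact lintegral_heatKernel_mul_rpow_norm_le hν₀ hν₁ ht
    _ ≤ ENNReal.ofReal (2 ^ (d + 3) * M * t ^ (ν / 2)) := by
        rw [← ENNReal.ofReal_mul (by positivity)]
        refine ENNReal.ofReal_le_ofReal ?_
        calc 2 * M * (2 ^ ((d : ℝ) / 2 + 1) * t ^ (ν / 2))
            ≤ 2 * M * (2 ^ (d + 2) * t ^ (ν / 2)) := by gcongr
          _ = 2 ^ (d + 3) * M * t ^ (ν / 2) := by ring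

def heatSemigroup (d : ℕ) (t : ℝ) (u : EuclideanSpace ℝ (Fin d) → ℂ)
    (x : EuclideanSpace ℝ (Fin d)) : ℂ :=
  ∫ y, (heatKernel d t y : ℂ) * u (x - y)

theorem integrable_heatKernel_mul_comp_sub (ht : 0 < t) {u : EuclideanSpace ℝ (Fin d) → ℂ}
    (hu : MemLp u 2) (x : EuclideanSpace ℝ (Fin d)) :
    Integrable (fun y => (heatKernel d t y : ℂ) * u (x - y)) :=
  (memLp_two_heatKernel ht).ofReal.integrable_mul
    (hu.comp_measurePreserving (Measure.measurePreserving_sub_left volume x))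

theorem heatSemigroup_mul_sub_mul_heatSemigroup (ht : 0 < t)
    {η u : EuclideanSpace ℝ (Fin d) → ℂ} (hu : MemLp u 2) (hηu : MemLp (fun z => η z * u z) 2)
    (x : EuclideanSpace ℝ (Fin d)) :
    heatSemigroup d t (fun z => η z * u z) x - η x * heatSemigroup d t u x
      = ∫ y, (heatKernel d t y : ℂ) * ((η (x - y) - η x) * u (x - y)) := by
  rw [heatSemigroup, heatSemigroup, ← integral_const_mul,
    ← integral_sub (integrable_heatKernel_mul_comp_sub ht hηu x)
      ((integrable_heatKernel_mul_comp_sub ht hu x).const_mul _)]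
  congr 1 with y
  ring

theorem enorm_heatSemigroup_commutator_le (ht : 0 < t) {η u : EuclideanSpace ℝ (Fin d) → ℂ}
    (hu : MemLp u 2) (hηu : MemLp (fun z => η z * u z) 2) {ω : EuclideanSpace ℝ (Fin d) → ℝ}
    (hω : ∀ x y, ‖η (x - y) - η x‖ ≤ ω y) (x : EuclideanSpace ℝ (Fin d)) :
    ‖heatSemigroup d t (fun z => η z * u z) x - η x * heatSemigroup d t u x‖ₑ
      ≤ ∫⁻ y, ENNReal.ofReal (heatKernel d t y * ω y) * ‖u (x - y)‖ₑ := by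
  rw [heatSemigroup_mul_sub_mul_heatSemigroup ht hu hηu]
  refine (enorm_integral_le_lintegral_enorm _).trans (lintegral_mono fun y => ?_)
  rw [enorm_mul, enorm_mul, ← mul_assoc, ← enorm_mul, ← ofReal_norm, norm_mul, Complex.norm_real,
    Real.norm_of_nonneg (heatKernel_pos ht y).le]
  gcongr
  · exact (heatKernel_pos ht y).le
  · exact hω x y

end HeatKernel

theorem stmt7_general (d : ℕ) (ν M : ℝ) (hν : ν ∈ Set.Ioo (0 : ℝ) 1)
    (η : EuclideanSpace ℝ (Fin d) → ℂ)
    (hηb : ∀ x, ‖η x‖ ≤ M)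
    (hηHol : ∀ x y : EuclideanSpace ℝ (Fin d),
      0 < dist x y → dist x y ≤ 1 → ‖η x - η y‖ ≤ M * dist x y ^ ν)
    (t : ℝ) (ht : 0 < t)
    (u : EuclideanSpace ℝ (Fin d) → ℂ)
    (hu : MemLp u 2 (volume : Measure (EuclideanSpace ℝ (Fin d)))) :
    eLpNorm
      (fun x =>
        (∫ y, (heatKernel d t y : ℂ) * (η (x - y) * u (x - y))) -
          η x * ∫ y, (heatKernel d t y : ℂ) * u (x - y))
      2 volume
      ≤ ENNReal.ofReal (2 ^ (d + 3) * M * t ^ (ν / 2)) * eLpNorm u 2 volume := by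
  obtain ⟨hν₀, hν₁⟩ := hν
  have hM : 0 ≤ M := (norm_nonneg _).trans (hηb 0)
  have hηHolder : ∀ x y, ‖η x - η y‖ ≤ 2 * M * dist x y ^ ν :=
    norm_sub_le_two_mul_dist_rpow hν₀.le hηb hηHol
  have hηu : MemLp (fun z => η z * u z) 2 volume :=
    hu.mul' (memLp_top_of_bound
      (continuous_of_norm_sub_le_mul_dist_rpow hν₀ hηHolder).aestronglyMeasurable M (ae_of_all _ hηb))
  have hω : ∀ x y, ‖η (x - y) - η x‖ ≤ 2 * M * ‖y‖ ^ ν := fun x y => by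
    simpa only [dist_eq_norm, sub_sub_cancel_left, norm_neg] using hηHolder (x - y) x
  have hK : AEMeasurable fun y => ENNReal.ofReal (heatKernel d t y * (2 * M * ‖y‖ ^ ν)) := by
    fun_prop (disch := exact fun _ => Or.inr hν₀.le)
  change eLpNorm (fun x => heatSemigroup d t (fun z => η z * u z) x - η x * heatSemigroup d t u x)
    2 volume ≤ _
  calc _ ≤ (∫⁻ y, ENNReal.ofReal (heatKernel d t y * (2 * M * ‖y‖ ^ ν))) * eLpNorm u 2 volume :=
        eLpNorm_two_le_lintegral_mul_eLpNorm_two hK hu.1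
          (enorm_heatSemigroup_commutator_le ht hu hηu hω)
    _ ≤ _ := by
        gcongr
        exact lintegral_heatKernel_mul_two_mul_rpow_norm_le hν₀.le hν₁.le hM ht

/-- `L²` bound for the commutator of the heat semigroup with
multiplication by a bounded Hölder continuous function. -/
theorem stmt7 (d : ℕ) (hd : 1 ≤ d) (ν M : ℝ) (hν : ν ∈ Set.Ioo (0 : ℝ) 1) (hM : 0 < M)
    (η : EuclideanSpace ℝ (Fin d) → ℂ)
    (hηb : ∀ x, ‖η x‖ ≤ M)
    (hηHol : ∀ x y : EuclideanSpace ℝ (Fin d),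
      0 < dist x y → dist x y ≤ 1 → ‖η x - η y‖ ≤ M * dist x y ^ ν)
    (t : ℝ) (ht : 0 < t)
    (u : EuclideanSpace ℝ (Fin d) → ℂ)
    (hu : MemLp u 2 (volume : Measure (EuclideanSpace ℝ (Fin d)))) :
    eLpNorm
      (fun x =>
        (∫ y, (heatKernel d t y : ℂ) * (η (x - y) * u (x - y))) -
          η x * ∫ y, (heatKernel d t y : ℂ) * u (x - y))
      2 volume
      ≤ ENNReal.ofReal (2 ^ (d + 3) * M * t ^ (ν / 2)) * eLpNorm u 2 volume :=
  stmt7_general d ν M hν η hηb hηHol t ht u hu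
end
end

section
/- Let d ≥ 1 and a₁, a₂, b, ε > 0. Let K¹, K² : (0,∞) × ℝ^d × ℝ^d → ℂ be measurable functions satisfying |K¹_s(x, z)| ≤ a₁ s^{−(d+1)/2} e^{εs} e^{−b|x−z|²/s} and |K²_s(z, y)| ≤ a₂ s^{−(d+1)/2} e^{εs} e^{−b|z−y|²/s} for all s > 0 and x, y, z ∈ ℝ^d. Then for all t > 0 and x, y ∈ ℝ^d, ∫_0^t ∫_{ℝ^d} |K¹_s(x, z)| · |K²_{t−s}(z, y)| dz ds ≤ π · (π/b)^{d/2} · a₁ a₂ · t^{−d/2} · e^{εt} · e^{−b|x−y|²/t}. -/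
/-!
Completing the square in `z` (the Gaussian semigroup identity) turns the product of the two
Gaussian bounds at times `s` and `t - s` into the Gaussian of `x - y` at time `t` times a Gaussian
in `z` of variance `s (t - s) / t`, whose integral is explicit. The powers of `s` and `t - s` then
collapse to `s ^ (-1/2) (t - s) ^ (-1/2)`, and the remaining time integral is the Beta integral
`B(1/2, 1/2) = π`.
-/

open MeasureTheory Set
open scoped Real

lemma Complex.betaIntegral_one_half_one_half : Complex.betaIntegral (1 / 2) (1 / 2) = π := by
  have h := Complex.Gamma_mul_Gamma_eq_betaIntegral (s := 1 / 2) (t := 1 / 2)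
    (by norm_num) (by norm_num)
  norm_num [Complex.Gamma_one_half_eq] at h
  rw [← h, ← Complex.cpow_add _ _ (Complex.ofReal_ne_zero.mpr Real.pi_ne_zero)]
  norm_num

lemma integral_rpow_neg_half_mul_rpow_neg_half {t : ℝ} (ht : 0 < t) :
    ∫ s in Ioo 0 t, s ^ (-1 / 2 : ℝ) * (t - s) ^ (-1 / 2 : ℝ) = π := by
  have h := Complex.betaIntegral_scaled (1 / 2) (1 / 2) ht
  rw [Complex.betaIntegral_one_half_one_half] at h
  norm_num at h
  rw [← integral_Ioc_eq_integral_Ioo, ← intervalIntegral.integral_of_le ht.le]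
  apply Complex.ofReal_injective
  rw [← intervalIntegral.integral_ofReal, ← h]
  refine intervalIntegral.integral_congr fun s hs => ?_
  rw [uIcc_of_le ht.le] at hs
  simp only [Complex.ofReal_mul]
  rw [Complex.ofReal_cpow hs.1, Complex.ofReal_cpow (sub_nonneg.mpr hs.2)]
  norm_num

section

variable {E : Type*} [NormedAddCommGroup E] [InnerProductSpace ℝ E]

lemma norm_sub_sq_div_add_norm_sub_sq_div {s r : ℝ} (hs : 0 < s) (hr : 0 < r) (x y z : E) :
    ‖x - z‖ ^ 2 / s + ‖z - y‖ ^ 2 / r =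
      ‖x - y‖ ^ 2 / (s + r) + (s + r) / (s * r) * ‖z - (s + r)⁻¹ • (r • x + s • y)‖ ^ 2 := by
  have hsr : s + r ≠ 0 := by positivity
  have hcenter : (s + r) • (z - (s + r)⁻¹ • (r • x + s • y)) = s • (z - y) - r • (x - z) := by
    rw [smul_sub, smul_inv_smul₀ hsr]; module
  have hnorm : (s + r) ^ 2 * ‖z - (s + r)⁻¹ • (r • x + s • y)‖ ^ 2 =
      s ^ 2 * ‖z - y‖ ^ 2 - 2 * (s * r) * inner ℝ (z - y) (x - z) + r ^ 2 * ‖x - z‖ ^ 2 := by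
    rw [← sq_abs (s + r), ← Real.norm_eq_abs, ← mul_pow, ← norm_smul, hcenter, norm_sub_sq_real,
      norm_smul, norm_smul, inner_smul_left, inner_smul_right]
    simp only [Real.norm_eq_abs, mul_pow, sq_abs, conj_trivial]
    ring
  have hxy : ‖x - y‖ ^ 2 = ‖x - z‖ ^ 2 + 2 * inner ℝ (x - z) (z - y) + ‖z - y‖ ^ 2 := by
    rw [← norm_add_sq_real, sub_add_sub_cancel]
  rw [real_inner_comm] at hnorm
  generalize ‖z - (s + r)⁻¹ • (r • x + s • y)‖ ^ 2 = w at hnorm ⊢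
  field_simp
  linear_combination (-1 : ℝ) * hnorm - s * r * hxy

variable [FiniteDimensional ℝ E] [MeasurableSpace E] [BorelSpace E]

lemma integral_exp_neg_mul_norm_sub_sq {c : ℝ} (hc : 0 < c) (m : E) :
    ∫ z, Real.exp (-c * ‖z - m‖ ^ 2) = (π / c) ^ (Module.finrank ℝ E / 2 : ℝ) := by
  rw [integral_sub_right_eq_self (fun z => Real.exp (-c * ‖z‖ ^ 2)) m]
  exact GaussianFourier.integral_rexp_neg_mul_sq_norm hc

lemma integral_exp_mul_exp_neg_mul_norm_sub_sq {b s r : ℝ} (hb : 0 < b) (hs : 0 < s)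
    (hr : 0 < r) (x y : E) :
    ∫ z, Real.exp (-b * ‖x - z‖ ^ 2 / s) * Real.exp (-b * ‖z - y‖ ^ 2 / r) =
      (π / b * (s * r / (s + r))) ^ (Module.finrank ℝ E / 2 : ℝ) *
        Real.exp (-b * ‖x - y‖ ^ 2 / (s + r)) := by
  have hc : 0 < b * ((s + r) / (s * r)) := by positivity
  have hsplit : ∀ z : E, Real.exp (-b * ‖x - z‖ ^ 2 / s) * Real.exp (-b * ‖z - y‖ ^ 2 / r) =
      Real.exp (-b * ‖x - y‖ ^ 2 / (s + r)) *
        Real.exp (-(b * ((s + r) / (s * r))) * ‖z - (s + r)⁻¹ • (r • x + s • y)‖ ^ 2) := by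
    intro z
    rw [← Real.exp_add, ← Real.exp_add]
    congr 1
    linear_combination (-b) * norm_sub_sq_div_add_norm_sub_sq_div hs hr x y z
  simp_rw [hsplit]
  rw [integral_const_mul, integral_exp_neg_mul_norm_sub_sq hc, mul_comm]
  congr 2
  field_simp

variable {F : Type*} [NormedAddCommGroup F]

lemma integral_norm_mul_norm_le_of_gaussian_bounds {b s r A B : ℝ} (hb : 0 < b) (hs : 0 < s)
    (hr : 0 < r) {x y : E} {f g : E → F}
    (hf : ∀ z, ‖f z‖ ≤ A * Real.exp (-b * ‖x - z‖ ^ 2 / s))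
    (hg : ∀ z, ‖g z‖ ≤ B * Real.exp (-b * ‖z - y‖ ^ 2 / r)) :
    ∫ z, ‖f z‖ * ‖g z‖ ≤ A * B * (π / b * (s * r / (s + r))) ^ (Module.finrank ℝ E / 2 : ℝ) *
        Real.exp (-b * ‖x - y‖ ^ 2 / (s + r)) := by
  have hexact := integral_exp_mul_exp_neg_mul_norm_sub_sq hb hs hr x y
  have hint : Integrable fun z : E =>
      Real.exp (-b * ‖x - z‖ ^ 2 / s) * Real.exp (-b * ‖z - y‖ ^ 2 / r) :=
    .of_integral_ne_zero (by rw [hexact]; positivity)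
  calc ∫ z, ‖f z‖ * ‖g z‖
      ≤ ∫ z, A * B * (Real.exp (-b * ‖x - z‖ ^ 2 / s) * Real.exp (-b * ‖z - y‖ ^ 2 / r)) := by
        refine integral_mono_of_nonneg (.of_forall fun z => by positivity) (hint.const_mul _)
          (.of_forall fun z => ?_)
        calc ‖f z‖ * ‖g z‖
            ≤ (A * Real.exp (-b * ‖x - z‖ ^ 2 / s)) * (B * Real.exp (-b * ‖z - y‖ ^ 2 / r)) :=
              mul_le_mul (hf z) (hg z) (norm_nonneg _) ((norm_nonneg _).trans (hf z))
          _ = _ := by ring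
    _ = _ := by rw [integral_const_mul, hexact]; ring

lemma integral_norm_mul_norm_le_of_heat_kernel_bounds {n : ℕ} (hn : Module.finrank ℝ E = n)
    {a₁ a₂ b ε : ℝ} (hb : 0 < b) {K₁ K₂ : ℝ → E → E → F}
    (hK₁ : ∀ s : ℝ, 0 < s → ∀ x z : E, ‖K₁ s x z‖ ≤
      a₁ * s ^ (-((n : ℝ) + 1) / 2) * Real.exp (ε * s) * Real.exp (-b * ‖x - z‖ ^ 2 / s))
    (hK₂ : ∀ s : ℝ, 0 < s → ∀ z y : E, ‖K₂ s z y‖ ≤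
      a₂ * s ^ (-((n : ℝ) + 1) / 2) * Real.exp (ε * s) * Real.exp (-b * ‖z - y‖ ^ 2 / s))
    {s r : ℝ} (hs : 0 < s) (hr : 0 < r) (x y : E) :
    ∫ z, ‖K₁ s x z‖ * ‖K₂ r z y‖ ≤
      (π / b) ^ ((n : ℝ) / 2) * (a₁ * a₂) * (s + r) ^ (-(n : ℝ) / 2) * Real.exp (ε * (s + r)) *
        Real.exp (-b * ‖x - y‖ ^ 2 / (s + r)) * (s ^ (-1 / 2 : ℝ) * r ^ (-1 / 2 : ℝ)) := by
  refine (integral_norm_mul_norm_le_of_gaussian_bounds hb hs hr (hK₁ s hs x)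
    (fun z => hK₂ r hr z y)).trans_eq ?_
  have hsr : 0 < s + r := by positivity
  have hpow (u : ℝ) (hu : 0 < u) :
      u ^ (-((n : ℝ) + 1) / 2) * u ^ ((n : ℝ) / 2) = u ^ (-1 / 2 : ℝ) := by
    rw [← Real.rpow_add hu]; ring_nf
  rw [hn, Real.mul_rpow (by positivity) (by positivity), Real.div_rpow (by positivity) hsr.le,
    Real.mul_rpow hs.le hr.le, neg_div (2 : ℝ) (n : ℝ), Real.rpow_neg hsr.le, mul_add, Real.exp_add,
    ← hpow s hs, ← hpow r hr]
  ring

end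

theorem stmt12_general (d : ℕ) (a₁ a₂ b ε : ℝ) (hb : 0 < b)
    (K₁ K₂ : ℝ → EuclideanSpace ℝ (Fin d) → EuclideanSpace ℝ (Fin d) → ℂ)
    (hK₁ : ∀ s : ℝ, 0 < s → ∀ x z : EuclideanSpace ℝ (Fin d),
      ‖K₁ s x z‖ ≤ a₁ * s ^ (-((d : ℝ) + 1) / 2) * Real.exp (ε * s) *
        Real.exp (-b * ‖x - z‖ ^ 2 / s))
    (hK₂ : ∀ s : ℝ, 0 < s → ∀ z y : EuclideanSpace ℝ (Fin d),
      ‖K₂ s z y‖ ≤ a₂ * s ^ (-((d : ℝ) + 1) / 2) * Real.exp (ε * s) *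
        Real.exp (-b * ‖z - y‖ ^ 2 / s)) :
    ∀ t : ℝ, 0 < t → ∀ x y : EuclideanSpace ℝ (Fin d),
      (∫ s in Set.Ioo (0 : ℝ) t, ∫ z : EuclideanSpace ℝ (Fin d),
          ‖K₁ s x z‖ * ‖K₂ (t - s) z y‖) ≤
        Real.pi * (Real.pi / b) ^ ((d : ℝ) / 2) * (a₁ * a₂) * t ^ (-(d : ℝ) / 2) *
          Real.exp (ε * t) * Real.exp (-b * ‖x - y‖ ^ 2 / t) := by
  intro t ht x y
  set C := (π / b) ^ ((d : ℝ) / 2) * (a₁ * a₂) * t ^ (-(d : ℝ) / 2) * Real.exp (ε * t) *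
    Real.exp (-b * ‖x - y‖ ^ 2 / t)
  have hbeta := integral_rpow_neg_half_mul_rpow_neg_half ht
  have hinner : ∀ s ∈ Ioo 0 t, ∫ z, ‖K₁ s x z‖ * ‖K₂ (t - s) z y‖ ≤
      C * (s ^ (-1 / 2 : ℝ) * (t - s) ^ (-1 / 2 : ℝ)) := fun s hs => by
    simpa only [add_sub_cancel] using integral_norm_mul_norm_le_of_heat_kernel_bounds
      (finrank_euclideanSpace_fin (𝕜 := ℝ)) hb hK₁ hK₂ hs.1 (sub_pos.2 hs.2) x y
  calc ∫ s in Ioo 0 t, ∫ z, ‖K₁ s x z‖ * ‖K₂ (t - s) z y‖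
      ≤ ∫ s in Ioo 0 t, C * (s ^ (-1 / 2 : ℝ) * (t - s) ^ (-1 / 2 : ℝ)) :=
        integral_mono_of_nonneg (.of_forall fun s => integral_nonneg fun z => by positivity)
          ((Integrable.of_integral_ne_zero (by rw [hbeta]; positivity)).const_mul C)
          ((ae_restrict_mem measurableSet_Ioo).mono hinner)
    _ = π * C := by rw [integral_const_mul, hbeta, mul_comm]
    _ = _ := by ring

/-- composition of two families of kernels satisfying Gaussian bounds. -/
theorem stmt12 (d : ℕ) (hd : 1 ≤ d) (a₁ a₂ b ε : ℝ)
    (ha₁ : 0 < a₁) (ha₂ : 0 < a₂) (hb : 0 < b) (hε : 0 < ε)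
    (K₁ K₂ : ℝ → EuclideanSpace ℝ (Fin d) → EuclideanSpace ℝ (Fin d) → ℂ)
    (hK₁m : Measurable fun p : ℝ × EuclideanSpace ℝ (Fin d) × EuclideanSpace ℝ (Fin d) =>
      K₁ p.1 p.2.1 p.2.2)
    (hK₂m : Measurable fun p : ℝ × EuclideanSpace ℝ (Fin d) × EuclideanSpace ℝ (Fin d) =>
      K₂ p.1 p.2.1 p.2.2)
    (hK₁ : ∀ s : ℝ, 0 < s → ∀ x z : EuclideanSpace ℝ (Fin d),
      ‖K₁ s x z‖ ≤ a₁ * s ^ (-((d : ℝ) + 1) / 2) * Real.exp (ε * s) *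
        Real.exp (-b * ‖x - z‖ ^ 2 / s))
    (hK₂ : ∀ s : ℝ, 0 < s → ∀ z y : EuclideanSpace ℝ (Fin d),
      ‖K₂ s z y‖ ≤ a₂ * s ^ (-((d : ℝ) + 1) / 2) * Real.exp (ε * s) *
        Real.exp (-b * ‖z - y‖ ^ 2 / s)) :
    ∀ t : ℝ, 0 < t → ∀ x y : EuclideanSpace ℝ (Fin d),
      (∫ s in Set.Ioo (0 : ℝ) t, ∫ z : EuclideanSpace ℝ (Fin d),
          ‖K₁ s x z‖ * ‖K₂ (t - s) z y‖) ≤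
        Real.pi * (Real.pi / b) ^ ((d : ℝ) / 2) * (a₁ * a₂) * t ^ (-(d : ℝ) / 2) *
          Real.exp (ε * t) * Real.exp (-b * ‖x - y‖ ^ 2 / t) :=
  stmt12_general d a₁ a₂ b ε hb K₁ K₂ hK₁ hK₂
end

section
/- Let d ≥ 1, let 0 < ν < ν̃ < 1, let a, b, ε > 0, κ > 0 and τ ∈ [0, 1). Then there exist a₂, b₂ > 0, depending only on d, a, b, ε, ν, ν̃, κ and τ, with the following property. Let t > 0 and let F : ℝ^d × ℝ^d → ℂ satisfy (i) |F(x, y)| ≤ a t^{−(d+1)/2} e^{εt} e^{−b|x−y|²/t} for all x, y ∈ ℝ^d, and (ii) |F(x+h, y) − F(x, y)| ≤ a t^{−(d+1)/2} (|h|/√t)^{ν̃} e^{εt} for all x, y, h ∈ ℝ^d. Then |F(x+h, y) − F(x, y)| ≤ a₂ t^{−(d+1)/2} ( |h| / (|x−y| + √t) )^{ν} e^{εt} e^{−b₂ |x−y|²/t} for all x, y, h ∈ ℝ^d with |h| ≤ τ |x−y| + κ √t. -/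
open scoped Real

noncomputable section

private lemma stmt13_aux (b τ r s w κ : ℝ) (hb : 0 < b) (hτ1 : τ < 1)
    (hr : 0 ≤ r) (hs : 0 < s) (hκ : 0 < κ) (hw0 : 0 ≤ w)
    (hwge : (1 - τ) * r - κ * s ≤ w) :
    b * (1 - τ) ^ 2 / 2 * r ^ 2 ≤ b * w ^ 2 + b * κ ^ 2 * s ^ 2 := by
  rcases le_or_gt ((1 - τ) * r) (κ * s) with hcase | hcase
  · have h1 : ((1 - τ) * r) ^ 2 ≤ (κ * s) ^ 2 :=
      pow_le_pow_left₀ (mul_nonneg (by linarith) hr) hcase 2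
    nlinarith [mul_le_mul_of_nonneg_left h1 hb.le, sq_nonneg w, hb.le]
  · have hsq : ((1 - τ) * r - κ * s) ^ 2 ≤ w ^ 2 :=
      pow_le_pow_left₀ (by linarith) hwge 2
    nlinarith [mul_le_mul_of_nonneg_left hsq hb.le,
      mul_nonneg hb.le (sq_nonneg ((1 - τ) * r - 2 * (κ * s)))]

set_option maxHeartbeats 1000000 in
/-- interpolation of a uniform Hölder estimate of order `ν̃` with a
Gaussian bound into a Hölder Gaussian bound of smaller order `ν`. -/
theorem stmt13 (d : ℕ) (hd : 1 ≤ d) (ν ν' a b ε κ τ : ℝ)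
    (hν : 0 < ν) (hνν' : ν < ν') (hν' : ν' < 1)
    (ha : 0 < a) (hb : 0 < b) (hε : 0 < ε) (hκ : 0 < κ) (hτ : τ ∈ Set.Ico (0 : ℝ) 1) :
    ∃ a₂ b₂ : ℝ, 0 < a₂ ∧ 0 < b₂ ∧
      ∀ t : ℝ, 0 < t →
        ∀ F : EuclideanSpace ℝ (Fin d) → EuclideanSpace ℝ (Fin d) → ℂ,
          (∀ x y, ‖F x y‖ ≤
            a * t ^ (-((d : ℝ) + 1) / 2) * Real.exp (ε * t) *
              Real.exp (-b * ‖x - y‖ ^ 2 / t)) →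
          (∀ x y h : EuclideanSpace ℝ (Fin d), ‖F (x + h) y - F x y‖ ≤
            a * t ^ (-((d : ℝ) + 1) / 2) * (‖h‖ / Real.sqrt t) ^ ν' * Real.exp (ε * t)) →
          ∀ x y h : EuclideanSpace ℝ (Fin d), ‖h‖ ≤ τ * ‖x - y‖ + κ * Real.sqrt t →
            ‖F (x + h) y - F x y‖ ≤
              a₂ * t ^ (-((d : ℝ) + 1) / 2) * (‖h‖ / (‖x - y‖ + Real.sqrt t)) ^ ν *
                Real.exp (ε * t) * Real.exp (-b₂ * ‖x - y‖ ^ 2 / t) := by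
  obtain ⟨hτ0, hτ1⟩ := hτ
  have hν'0 : 0 < ν' := hν.trans hνν'
  set θ : ℝ := ν / ν' with hθdef
  have hθ0 : 0 < θ := div_pos hν hν'0
  have hθ1 : θ < 1 := (div_lt_one hν'0).mpr hνν'
  set b' : ℝ := b * (1 - τ) ^ 2 / 2 with hb'def
  have hb'0 : 0 < b' := by
    have : 0 < 1 - τ := by linarith
    positivity
  set c : ℝ := (1 - θ) * b' / 2 with hcdef
  have hc0 : 0 < c := by
    have : 0 < 1 - θ := by linarith
    positivity
  set C₁ : ℝ := 2 * Real.exp (b * κ ^ 2) with hC₁def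
  have hC₁0 : 0 < C₁ := by positivity
  have hC₁1 : 1 ≤ C₁ := by
    have := Real.one_le_exp (by positivity : (0:ℝ) ≤ b * κ ^ 2)
    linarith
  refine ⟨C₁ * Real.exp (1 / (4 * c)) * a, c, by positivity, hc0, ?_⟩
  intro t ht F hF1 hF2 x y h hh
  set s := Real.sqrt t with hsdef
  have hs0 : 0 < s := Real.sqrt_pos.mpr ht
  have hst : s ^ 2 = t := Real.sq_sqrt ht.le
  set r := ‖x - y‖ with hrdef
  have hr0 : 0 ≤ r := norm_nonneg _
  set u : ℝ := r / s with hudef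
  have hu0 : 0 ≤ u := by positivity
  have hu2 : u ^ 2 = r ^ 2 / t := by rw [hudef, div_pow, hst]
  set D := t ^ (-((d : ℝ) + 1) / 2) with hDdef
  have hD0 : 0 < D := Real.rpow_pos_of_pos ht _
  set G := a * D * Real.exp (ε * t) with hGdef
  have hG0 : 0 < G := by positivity
  set q : ℝ := ‖h‖ / s with hqdef
  have hq0 : 0 ≤ q := by positivity
  set ρ : ℝ := ‖h‖ / (r + s) with hρdef
  have hρ0 : 0 ≤ ρ := by positivity
  have hrs0 : 0 < r + s := by linarith
  -- the Hölder bound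
  have hA : ‖F (x + h) y - F x y‖ ≤ G * q ^ ν' := by
    have := hF2 x y h
    calc ‖F (x + h) y - F x y‖ ≤ a * D * q ^ ν' * Real.exp (ε * t) := this
      _ = G * q ^ ν' := by rw [hGdef]; ring
  -- the Gaussian bound
  have hw : r - ‖h‖ ≤ ‖x + h - y‖ := by
    have h1 : x - y = (x + h - y) - h := by abel
    have h2 : ‖(x + h - y) - h‖ ≤ ‖x + h - y‖ + ‖h‖ := norm_sub_le _ _
    rw [hrdef, h1]
    linarith
  have key : b' * r ^ 2 ≤ b * ‖x + h - y‖ ^ 2 + b * κ ^ 2 * t := by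
    have hw0 : 0 ≤ ‖x + h - y‖ := norm_nonneg _
    have hhle : ‖h‖ ≤ τ * r + κ * s := hh
    have hwge : (1 - τ) * r - κ * s ≤ ‖x + h - y‖ := by linarith
    rw [hb'def, ← hst]
    exact stmt13_aux b τ r s _ κ hb hτ1 hr0 hs0 hκ hw0 hwge
  have hexpo : ∀ w2 : ℝ, b' * r ^ 2 ≤ b * w2 + b * κ ^ 2 * t →
      Real.exp (-b * w2 / t) ≤ Real.exp (b * κ ^ 2) * Real.exp (-b' * r ^ 2 / t) := by
    intro w2 hkey
    rw [← Real.exp_add, Real.exp_le_exp]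
    have h3 : b * κ ^ 2 + -b' * r ^ 2 / t = (b * κ ^ 2 * t + -b' * r ^ 2) / t := by
      field_simp
    rw [h3, div_le_div_iff₀ ht ht]
    have h4 : -b * w2 ≤ b * κ ^ 2 * t + -b' * r ^ 2 := by linarith
    exact mul_le_mul_of_nonneg_right h4 ht.le
  have hB : ‖F (x + h) y - F x y‖ ≤ C₁ * (G * Real.exp (-b' * r ^ 2 / t)) := by
    have e1 : Real.exp (-b * ‖x + h - y‖ ^ 2 / t) ≤
        Real.exp (b * κ ^ 2) * Real.exp (-b' * r ^ 2 / t) := hexpo _ key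
    have e2 : Real.exp (-b * r ^ 2 / t) ≤
        Real.exp (b * κ ^ 2) * Real.exp (-b' * r ^ 2 / t) := by
      apply hexpo
      have hb'b : b' ≤ b := by
        rw [hb'def]
        nlinarith [mul_nonneg hb.le (mul_nonneg hτ0 (by linarith : (0:ℝ) ≤ 2 - τ)), hb.le]
      linarith [mul_le_mul_of_nonneg_right hb'b (sq_nonneg r),
        mul_nonneg (mul_nonneg hb.le (sq_nonneg κ)) ht.le]
    have g1 : ‖F (x + h) y‖ ≤ G * Real.exp (-b * ‖x + h - y‖ ^ 2 / t) := by
      calc ‖F (x + h) y‖ ≤ a * D * Real.exp (ε * t) *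
            Real.exp (-b * ‖x + h - y‖ ^ 2 / t) := hF1 (x + h) y
        _ = G * Real.exp (-b * ‖x + h - y‖ ^ 2 / t) := by rw [hGdef]
    have g2 : ‖F x y‖ ≤ G * Real.exp (-b * r ^ 2 / t) := by
      calc ‖F x y‖ ≤ a * D * Real.exp (ε * t) * Real.exp (-b * r ^ 2 / t) := hF1 x y
        _ = G * Real.exp (-b * r ^ 2 / t) := by rw [hGdef]
    have m1 := mul_le_mul_of_nonneg_left e1 hG0.le
    have m2 := mul_le_mul_of_nonneg_left e2 hG0.le
    calc ‖F (x + h) y - F x y‖ ≤ ‖F (x + h) y‖ + ‖F x y‖ := norm_sub_le _ _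
      _ ≤ G * (Real.exp (b * κ ^ 2) * Real.exp (-b' * r ^ 2 / t)) +
            G * (Real.exp (b * κ ^ 2) * Real.exp (-b' * r ^ 2 / t)) := by linarith
      _ = C₁ * (G * Real.exp (-b' * r ^ 2 / t)) := by rw [hC₁def]; ring
  -- interpolation
  set P := ‖F (x + h) y - F x y‖ with hPdef
  have hP0 : 0 ≤ P := norm_nonneg _
  have hinterp : P ≤ (G * q ^ ν') ^ θ * (C₁ * (G * Real.exp (-b' * r ^ 2 / t))) ^ (1 - θ) := by
    rcases eq_or_lt_of_le hP0 with h0 | h0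
    · rw [← h0]
      positivity
    · have hPθ : P = P ^ θ * P ^ (1 - θ) := by
        rw [← Real.rpow_add h0]
        norm_num
      rw [hPθ]
      have t1 : P ^ θ ≤ (G * q ^ ν') ^ θ := Real.rpow_le_rpow h0.le hA hθ0.le
      have t2 : P ^ (1 - θ) ≤ (C₁ * (G * Real.exp (-b' * r ^ 2 / t))) ^ (1 - θ) :=
        Real.rpow_le_rpow h0.le hB (by linarith)
      exact mul_le_mul t1 t2 (Real.rpow_nonneg hP0 _) (Real.rpow_nonneg (by positivity) _)
  have halg : (G * q ^ ν') ^ θ * (C₁ * (G * Real.exp (-b' * r ^ 2 / t))) ^ (1 - θ)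
      = C₁ ^ (1 - θ) * G * q ^ ν * Real.exp (-b' * r ^ 2 / t * (1 - θ)) := by
    rw [Real.mul_rpow hG0.le (Real.rpow_nonneg hq0 _),
        Real.mul_rpow hC₁0.le (by positivity),
        Real.mul_rpow hG0.le (Real.exp_nonneg _),
        ← Real.rpow_mul hq0, ← Real.exp_mul]
    have hνν : ν' * θ = ν := by
      rw [hθdef]
      field_simp
    rw [hνν]
    have hGG : G ^ θ * G ^ (1 - θ) = G := by
      rw [← Real.rpow_add hG0]
      norm_num
    calc G ^ θ * q ^ ν * (C₁ ^ (1 - θ) * (G ^ (1 - θ) * Real.exp (-b' * r ^ 2 / t * (1 - θ))))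
        = (G ^ θ * G ^ (1 - θ)) * (C₁ ^ (1 - θ) * q ^ ν *
            Real.exp (-b' * r ^ 2 / t * (1 - θ))) := by ring
      _ = C₁ ^ (1 - θ) * G * q ^ ν * Real.exp (-b' * r ^ 2 / t * (1 - θ)) := by
          rw [hGG]; ring
  have hqsplit : q = ρ * (1 + u) := by
    rw [hqdef, hρdef, hudef]
    field_simp
    ring
  have hone : (1 + u) ^ ν ≤ Real.exp u := by
    have h1 : 1 + u ≤ Real.exp u := by
      have := Real.add_one_le_exp u
      linarith
    calc (1 + u) ^ ν ≤ (Real.exp u) ^ ν :=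
          Real.rpow_le_rpow (by linarith) h1 hν.le
      _ = Real.exp (u * ν) := by rw [← Real.exp_mul]
      _ ≤ Real.exp u := Real.exp_le_exp.mpr
          (by linarith [mul_nonneg hu0 (by linarith : (0:ℝ) ≤ 1 - ν)])
  have hqν : q ^ ν ≤ ρ ^ ν * Real.exp u := by
    rw [hqsplit, Real.mul_rpow hρ0 (by positivity)]
    exact mul_le_mul_of_nonneg_left hone (Real.rpow_nonneg hρ0 _)
  have hCle : C₁ ^ (1 - θ) ≤ C₁ := by
    calc C₁ ^ (1 - θ) ≤ C₁ ^ (1 : ℝ) :=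
          Real.rpow_le_rpow_of_exponent_le hC₁1 (by linarith)
      _ = C₁ := Real.rpow_one _
  have hexpfin : Real.exp u * Real.exp (-b' * r ^ 2 / t * (1 - θ)) ≤
      Real.exp (1 / (4 * c)) * Real.exp (-c * r ^ 2 / t) := by
    rw [← Real.exp_add, ← Real.exp_add, Real.exp_le_exp]
    have h1 : -b' * r ^ 2 / t * (1 - θ) = -2 * c * u ^ 2 := by
      rw [hcdef, hu2]; ring
    have h2 : -c * r ^ 2 / t = -c * u ^ 2 := by
      rw [hu2]; ring
    rw [h1, h2]
    have hfact : c * u ^ 2 - u + 1 / (4 * c) = (2 * c * u - 1) ^ 2 / (4 * c) := by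
      field_simp
      ring
    linarith [div_nonneg (sq_nonneg (2 * c * u - 1)) (by positivity : (0:ℝ) ≤ 4 * c)]
  calc P ≤ (G * q ^ ν') ^ θ * (C₁ * (G * Real.exp (-b' * r ^ 2 / t))) ^ (1 - θ) := hinterp
    _ = C₁ ^ (1 - θ) * G * q ^ ν * Real.exp (-b' * r ^ 2 / t * (1 - θ)) := halg
    _ ≤ C₁ * G * (ρ ^ ν * Real.exp u) * Real.exp (-b' * r ^ 2 / t * (1 - θ)) := by
        gcongr
    _ = C₁ * G * ρ ^ ν * (Real.exp u * Real.exp (-b' * r ^ 2 / t * (1 - θ))) := by ring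
    _ ≤ C₁ * G * ρ ^ ν * (Real.exp (1 / (4 * c)) * Real.exp (-c * r ^ 2 / t)) := by
        have hpos : 0 ≤ C₁ * G * ρ ^ ν := by positivity
        exact mul_le_mul_of_nonneg_left hexpfin hpos
    _ = C₁ * Real.exp (1 / (4 * c)) * a * D * ρ ^ ν * Real.exp (ε * t) *
          Real.exp (-c * r ^ 2 / t) := by
        rw [hGdef]; ring
end
end

section
/- Let d ≥ 1, a > 0, ω > 0, ω₃ ≥ 0, E ≥ 0 and Ẽ ∈ ℝ. Let t > 0, x, y ∈ ℝ^d, and let K ∈ ℂ. Suppose that for every ρ ≥ 0 and every Lipschitz function ψ : ℝ^d → ℝ with |ψ(u) − ψ(v)| ≤ |u − v| for all u, v, one has |K| ≤ a (1 + ω₃(1+ρ²)t)^E t^{−Ẽ} e^{ωρ²t} e^{−ρ(ψ(x)−ψ(y))}. Then |K| ≤ a ( 1 + ω₃ ( t + |x−y|²/(4ω²t) ) )^E t^{−Ẽ} e^{−|x−y|²/(4ωt)}. -/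
open scoped Real

noncomputable section

/-- the Davies perturbation minimisation step (Step 6 of the
appendix of the paper): optimising over Lipschitz weights and over `ρ`. -/
theorem stmt15 (d : ℕ) (hd : 1 ≤ d) (a ω ω₃ E Et : ℝ)
    (ha : 0 < a) (hω : 0 < ω) (hω₃ : 0 ≤ ω₃) (hE : 0 ≤ E)
    (t : ℝ) (ht : 0 < t) (x y : EuclideanSpace ℝ (Fin d)) (K : ℂ)
    (hyp : ∀ ρ : ℝ, 0 ≤ ρ →
      ∀ ψ : EuclideanSpace ℝ (Fin d) → ℝ, (∀ u v, |ψ u - ψ v| ≤ ‖u - v‖) →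
        ‖K‖ ≤ a * (1 + ω₃ * (1 + ρ ^ 2) * t) ^ E * t ^ (-Et) *
          Real.exp (ω * ρ ^ 2 * t) * Real.exp (-ρ * (ψ x - ψ y))) :
    ‖K‖ ≤ a * (1 + ω₃ * (t + ‖x - y‖ ^ 2 / (4 * ω ^ 2 * t))) ^ E * t ^ (-Et) *
      Real.exp (-‖x - y‖ ^ 2 / (4 * ω * t)) := by
  set ρ : ℝ := ‖x - y‖ / (2 * ω * t) with hρdef
  have hρ : 0 ≤ ρ := div_nonneg (norm_nonneg _) (by positivity)
  have hψ : ∀ u v : EuclideanSpace ℝ (Fin d), |‖u - y‖ - ‖v - y‖| ≤ ‖u - v‖ := by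
    intro u v
    have := abs_norm_sub_norm_le (u - y) (v - y)
    simpa [sub_sub_sub_cancel_right] using this
  have h := hyp ρ hρ (fun u => ‖u - y‖) hψ
  have hxy : (fun u : EuclideanSpace ℝ (Fin d) => ‖u - y‖) x -
      (fun u : EuclideanSpace ℝ (Fin d) => ‖u - y‖) y = ‖x - y‖ := by simp
  have hρ2 : ρ ^ 2 * t = ‖x - y‖ ^ 2 / (4 * ω ^ 2 * t) := by
    rw [hρdef]; field_simp; ring
  have hexp : Real.exp (ω * ρ ^ 2 * t) * Real.exp (-ρ * ‖x - y‖) =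
      Real.exp (-‖x - y‖ ^ 2 / (4 * ω * t)) := by
    rw [← Real.exp_add]
    congr 1
    rw [hρdef]; field_simp; ring
  have hbase : 1 + ω₃ * (1 + ρ ^ 2) * t =
      1 + ω₃ * (t + ‖x - y‖ ^ 2 / (4 * ω ^ 2 * t)) := by
    rw [← hρ2]; ring
  calc ‖K‖ ≤ a * (1 + ω₃ * (1 + ρ ^ 2) * t) ^ E * t ^ (-Et) *
          Real.exp (ω * ρ ^ 2 * t) * Real.exp (-ρ * ‖x - y‖) := by
        simpa using h
    _ = a * (1 + ω₃ * (t + ‖x - y‖ ^ 2 / (4 * ω ^ 2 * t))) ^ E * t ^ (-Et) *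
          Real.exp (-‖x - y‖ ^ 2 / (4 * ω * t)) := by
        rw [hbase, mul_assoc, hexp]
end
end

section
/- Let d ≥ 1, a, b > 0 and r > 0. Let F : (0,∞) → ℂ be measurable with |F(t)| ≤ a t^{−(d+1)/2} e^{t/2} e^{−b r²/t} for all t > 0. Then the integral π^{−1/2} ∫_0^∞ t^{−1/2} e^{−t} F(t) dt converges absolutely and | π^{−1/2} ∫_0^∞ t^{−1/2} e^{−t} F(t) dt | ≤ c · r^{−d}, where c = (a/√π) ∫_0^∞ s^{−1−d/2} e^{−b/s} ds is finite. -/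
open MeasureTheory
open scoped Real

noncomputable section

/-- Integrability of `s ^ (-1 - d/2) * exp (-b/s)` on `(0, ∞)`. -/
lemma aux_int (d : ℕ) (hd : 1 ≤ d) {b : ℝ} (hb : 0 < b) :
    IntegrableOn (fun s : ℝ => s ^ (-1 - (d : ℝ) / 2) * Real.exp (-b / s))
      (Set.Ioi 0) volume := by
  set p : ℝ := -1 - (d : ℝ) / 2 with hp
  have hd1 : (1:ℝ) ≤ d := by exact_mod_cast hd
  have hmeas : Measurable fun s : ℝ => s ^ p * Real.exp (-b / s) := by fun_prop
  have hsplit : Set.Ioc (0:ℝ) 1 ∪ Set.Ioi 1 = Set.Ioi (0:ℝ) :=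
    Set.Ioc_union_Ioi_eq_Ioi zero_le_one
  rw [← hsplit]
  apply IntegrableOn.union
  · -- bounded on (0,1]
    set C : ℝ := (d + 1).factorial / b ^ (d + 1) with hC
    apply Measure.integrableOn_of_bounded (M := C)
      (measure_Ioc_lt_top).ne hmeas.aestronglyMeasurable
    filter_upwards [ae_restrict_mem measurableSet_Ioc] with s hs
    obtain ⟨hs0, hs1⟩ := hs
    have hbs : 0 ≤ b / s := le_of_lt (div_pos hb hs0)
    have h1 : Real.exp (-b / s) ≤ (d + 1).factorial * s ^ (d + 1) / b ^ (d + 1) := by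
      have := Real.pow_div_factorial_le_exp (x := b / s) hbs (d + 1)
      rw [neg_div, Real.exp_neg]
      rw [inv_le_comm₀ (Real.exp_pos _) (by positivity)]
      calc ((d + 1).factorial * s ^ (d + 1) / b ^ (d + 1))⁻¹
          = (b / s) ^ (d + 1) / (d + 1).factorial := by
            rw [div_pow]; field_simp
        _ ≤ Real.exp (b / s) := this
    have h2 : s ^ p * Real.exp (-b / s) ≤ C := by
      calc s ^ p * Real.exp (-b / s)
          ≤ s ^ p * ((d + 1).factorial * s ^ (d + 1) / b ^ (d + 1)) := by
            apply mul_le_mul_of_nonneg_left h1 (Real.rpow_nonneg hs0.le _)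
        _ = (d + 1).factorial / b ^ (d + 1) * (s ^ p * s ^ (d + 1 : ℕ)) := by ring
        _ = (d + 1).factorial / b ^ (d + 1) * s ^ (p + (d + 1 : ℕ)) := by
            rw [← Real.rpow_natCast s (d+1), ← Real.rpow_add hs0]
        _ ≤ C * 1 := by
            apply mul_le_mul_of_nonneg_left _ (by positivity)
            apply Real.rpow_le_one hs0.le hs1
            push_cast [hp]; linarith [Nat.cast_nonneg (α := ℝ) d]
        _ = C := mul_one C
    rw [Real.norm_eq_abs, abs_of_nonneg (by positivity)]
    exact h2
  · -- dominated by s ^ p on (1, ∞)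
    apply Integrable.mono' (integrableOn_Ioi_rpow_of_lt (show p < -1 by
      rw [hp]; linarith) one_pos) hmeas.aestronglyMeasurable
    filter_upwards [ae_restrict_mem measurableSet_Ioi] with s hs
    have hs0 : (0:ℝ) < s := lt_trans one_pos hs
    rw [Real.norm_eq_abs, abs_of_nonneg (by positivity)]
    calc s ^ p * Real.exp (-b / s) ≤ s ^ p * 1 := by
          apply mul_le_mul_of_nonneg_left _ (Real.rpow_nonneg hs0.le _)
          rw [Real.exp_le_one_iff, neg_div]
          simp [le_of_lt (div_pos hb hs0)]
      _ = s ^ p := mul_one _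

lemma aux_cov (d : ℕ) {b r : ℝ} (hb : 0 < b) (hr : 0 < r) :
    ∫ t in Set.Ioi (0:ℝ), t ^ (-1 - (d:ℝ)/2) * Real.exp (-(b * r^2) / t)
      = r ^ (-(d:ℝ)) * ∫ s in Set.Ioi (0:ℝ), s ^ (-1 - (d:ℝ)/2) * Real.exp (-b / s) := by
  set p : ℝ := -1 - (d:ℝ)/2 with hp
  have hr2 : 0 < r^2 := by positivity
  have key := MeasureTheory.integral_comp_mul_left_Ioi
    (fun t : ℝ => t ^ p * Real.exp (-(b * r^2) / t)) 0 hr2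
  rw [mul_zero] at key
  have heq : Set.EqOn (fun x : ℝ => (r^2 * x) ^ p * Real.exp (-(b * r^2) / (r^2 * x)))
      (fun x : ℝ => (r^2) ^ p * (x ^ p * Real.exp (-b / x))) (Set.Ioi 0) := by
    intro x hx
    have hx0 : (0:ℝ) < x := hx
    simp only
    rw [Real.mul_rpow hr2.le hx0.le]
    have h2 : -(b * r^2) / (r^2 * x) = -b / x := by
      field_simp
    rw [h2]; ring
  rw [setIntegral_congr_fun measurableSet_Ioi heq, integral_const_mul] at key
  have key2 : ∫ t in Set.Ioi (0:ℝ), t ^ p * Real.exp (-(b*r^2)/t)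
      = r^2 * ((r^2)^p * ∫ s in Set.Ioi (0:ℝ), s ^ p * Real.exp (-b/s)) := by
    rw [key, smul_eq_mul, ← mul_assoc, mul_inv_cancel₀ hr2.ne', one_mul]
  have h3 : r^2 * (r^2)^p = r ^ (-(d:ℝ)) := by
    have h2r : r^2 = r ^ (2:ℝ) := by rw [← Real.rpow_natCast r 2]; norm_num
    rw [h2r, ← Real.rpow_mul hr.le, ← Real.rpow_add hr]
    congr 1
    rw [hp]; ring
  calc ∫ t in Set.Ioi (0:ℝ), t ^ p * Real.exp (-(b*r^2)/t)
      = r^2 * ((r^2)^p * ∫ s in Set.Ioi (0:ℝ), s ^ p * Real.exp (-b/s)) := key2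
    _ = (r^2 * (r^2)^p) * ∫ s in Set.Ioi (0:ℝ), s ^ p * Real.exp (-b/s) := by ring
    _ = r ^ (-(d:ℝ)) * ∫ s in Set.Ioi (0:ℝ), s ^ p * Real.exp (-b/s) := by rw [h3]

/-- size estimate for the Laplace transform of a family of kernels
satisfying Gaussian bounds (proof of Corollary 4.7 of the paper). -/
theorem stmt16 (d : ℕ) (hd : 1 ≤ d) (a b r : ℝ) (ha : 0 < a) (hb : 0 < b) (hr : 0 < r)
    (F : ℝ → ℂ) (hFm : Measurable F)
    (hF : ∀ t : ℝ, 0 < t →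
      ‖F t‖ ≤ a * t ^ (-((d : ℝ) + 1) / 2) * Real.exp (t / 2) * Real.exp (-b * r ^ 2 / t)) :
    IntegrableOn (fun s : ℝ => s ^ (-1 - (d : ℝ) / 2) * Real.exp (-b / s))
      (Set.Ioi 0) volume ∧
    IntegrableOn (fun t : ℝ => ((t ^ (-(1 : ℝ) / 2) * Real.exp (-t) : ℝ) : ℂ) * F t)
      (Set.Ioi 0) volume ∧
    ‖((Real.pi ^ (-(1 : ℝ) / 2) : ℝ) : ℂ) *
        ∫ t in Set.Ioi (0 : ℝ), ((t ^ (-(1 : ℝ) / 2) * Real.exp (-t) : ℝ) : ℂ) * F t‖ ≤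
      (a / Real.sqrt Real.pi *
          ∫ s in Set.Ioi (0 : ℝ), s ^ (-1 - (d : ℝ) / 2) * Real.exp (-b / s)) *
        r ^ (-(d : ℝ)) := by
  have hbr2 : 0 < b * r ^ 2 := by positivity
  set p : ℝ := -1 - (d:ℝ)/2 with hp
  -- The dominating function
  set G : ℝ → ℝ := fun t => a * (t ^ p * Real.exp (-(b * r^2) / t)) with hG
  have hGint : IntegrableOn G (Set.Ioi 0) volume := (aux_int d hd hbr2).const_mul a
  -- pointwise bound
  have hbound : ∀ t ∈ Set.Ioi (0:ℝ),
      ‖((t ^ (-(1 : ℝ) / 2) * Real.exp (-t) : ℝ) : ℂ) * F t‖ ≤ G t := by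
    intro t ht
    have ht0 : (0:ℝ) < t := ht
    have h1 : ‖((t ^ (-(1 : ℝ) / 2) * Real.exp (-t) : ℝ) : ℂ) * F t‖
        = t ^ (-(1:ℝ)/2) * Real.exp (-t) * ‖F t‖ := by
      rw [norm_mul, Complex.norm_real, Real.norm_eq_abs,
        abs_of_nonneg (by positivity)]
    rw [h1]
    calc t ^ (-(1:ℝ)/2) * Real.exp (-t) * ‖F t‖
        ≤ t ^ (-(1:ℝ)/2) * Real.exp (-t) *
          (a * t ^ (-((d : ℝ) + 1) / 2) * Real.exp (t / 2) * Real.exp (-b * r ^ 2 / t)) := by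
          apply mul_le_mul_of_nonneg_left (hF t ht0) (by positivity)
      _ = a * (t ^ (-(1:ℝ)/2) * t ^ (-((d : ℝ) + 1) / 2)) *
          (Real.exp (-t) * Real.exp (t / 2)) * Real.exp (-b * r ^ 2 / t) := by ring
      _ = a * t ^ p * Real.exp (-t + t/2) * Real.exp (-(b * r ^ 2) / t) := by
          have hexp : (-(1:ℝ)/2) + (-((d:ℝ)+1)/2) = p := by rw [hp]; ring
          rw [← Real.rpow_add ht0, ← Real.exp_add, hexp, neg_mul]
      _ ≤ a * t ^ p * 1 * Real.exp (-(b * r ^ 2) / t) := by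
          apply mul_le_mul_of_nonneg_right _ (Real.exp_pos _).le
          apply mul_le_mul_of_nonneg_left _ (by positivity)
          rw [Real.exp_le_one_iff]
          linarith
      _ = G t := by rw [hG]; ring
  -- measurability of the integrand
  have hmeas : AEStronglyMeasurable
      (fun t : ℝ => ((t ^ (-(1 : ℝ) / 2) * Real.exp (-t) : ℝ) : ℂ) * F t)
      (volume.restrict (Set.Ioi 0)) := by
    apply Measurable.aestronglyMeasurable
    exact (Complex.measurable_ofReal.comp (by fun_prop)).mul hFm
  have hint2 : IntegrableOn (fun t : ℝ => ((t ^ (-(1 : ℝ) / 2) * Real.exp (-t) : ℝ) : ℂ) * F t)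
      (Set.Ioi 0) volume := by
    apply Integrable.mono' hGint hmeas
    filter_upwards [ae_restrict_mem measurableSet_Ioi] with t ht
    exact hbound t ht
  refine ⟨aux_int d hd hb, hint2, ?_⟩
  -- the norm estimate
  have hnorm : ‖∫ t in Set.Ioi (0:ℝ), ((t ^ (-(1 : ℝ) / 2) * Real.exp (-t) : ℝ) : ℂ) * F t‖
      ≤ ∫ t in Set.Ioi (0:ℝ), G t := by
    apply norm_integral_le_of_norm_le hGint
    filter_upwards [ae_restrict_mem measurableSet_Ioi] with t ht
    exact hbound t ht
  have hGval : ∫ t in Set.Ioi (0:ℝ), G t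
      = a * (r ^ (-(d:ℝ)) * ∫ s in Set.Ioi (0:ℝ), s ^ p * Real.exp (-b / s)) := by
    rw [hG, integral_const_mul, aux_cov d hb hr]
  have hpi : Real.pi ^ (-(1:ℝ)/2) = (Real.sqrt Real.pi)⁻¹ := by
    rw [Real.sqrt_eq_rpow, ← Real.rpow_neg Real.pi_pos.le]
    norm_num
  have hpipos : (0:ℝ) < Real.pi ^ (-(1:ℝ)/2) := Real.rpow_pos_of_pos Real.pi_pos _
  calc ‖((Real.pi ^ (-(1 : ℝ) / 2) : ℝ) : ℂ) *
        ∫ t in Set.Ioi (0 : ℝ), ((t ^ (-(1 : ℝ) / 2) * Real.exp (-t) : ℝ) : ℂ) * F t‖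
      = Real.pi ^ (-(1:ℝ)/2) *
        ‖∫ t in Set.Ioi (0 : ℝ), ((t ^ (-(1 : ℝ) / 2) * Real.exp (-t) : ℝ) : ℂ) * F t‖ := by
        rw [norm_mul, Complex.norm_real, Real.norm_eq_abs, abs_of_pos hpipos]
    _ ≤ Real.pi ^ (-(1:ℝ)/2) * ∫ t in Set.Ioi (0:ℝ), G t :=
        mul_le_mul_of_nonneg_left hnorm hpipos.le
    _ = (a / Real.sqrt Real.pi *
          ∫ s in Set.Ioi (0 : ℝ), s ^ (-1 - (d : ℝ) / 2) * Real.exp (-b / s)) *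
        r ^ (-(d : ℝ)) := by
        rw [hGval, hpi, ← hp]
        field_simp
end
end
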